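/- arXiv:1607.01482 — 5 statements merged into one kernel-verified Lean document; each statement's English description precedes it below -/
import Mathlib

section
/- For the two-agent system ẋ₁ = q(x₂) - x₁, ẋ₂ = q(x₁) - x₂, the constant function x(t) = (1/2, 1/2) is a Krasowskii solution but not a Carathéodory solution; equivalently, the zero vector lies in the closed convex hull of the set of limit values of the vector field f(x) = (q(x₂) - x₁, q(x₁) - x₂) at the point (1/2, 1/2), while f(1/2, 1/2) ≠ 0. -/
/-!
At `(1/2, 1/2)` the field jumps: `f (1/2, 1/2) = (1/2, 1/2)`, while along the diagonal from below
`q` vanishes, so `f (s, s) = -(s, s)` tends to `-(1/2, 1/2)`. Every Krasowskii regularization set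
therefore contains `(1/2, 1/2)` and `-(1/2, 1/2)`, hence their midpoint `0`.
-/

noncomputable def q (s : ℝ) : ℤ := ⌊s + 1/2⌋

/-- The two-agent vector field f(x₁,x₂) = (q(x₂) - x₁, q(x₁) - x₂). -/
noncomputable def f (p : ℝ × ℝ) : ℝ × ℝ := ((q p.2 : ℝ) - p.1, (q p.1 : ℝ) - p.2)

/-- Krasowskii set-valued map: K f(x) = ⋂_{δ>0} cl co { f(y) : ‖y - x‖ < δ }. -/
noncomputable def Kras (x : ℝ × ℝ) : Set (ℝ × ℝ) :=
  ⋂ δ > (0 : ℝ), closure (convexHull ℝ (f '' {y | ‖y - x‖ < δ}))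

open Filter Topology

lemma q_half : q (1/2) = 1 := by
  norm_num [q]

lemma q_eq_zero {s : ℝ} (h₁ : -1/2 ≤ s) (h₂ : s < 1/2) : q s = 0 := by
  rw [q, Int.floor_eq_zero_iff]
  constructor <;> linarith

lemma f_half_half : f (1/2, 1/2) = (1/2, 1/2) := by
  simp only [f, q_half]
  norm_num

lemma f_diag_eq_neg {s : ℝ} (h₁ : -1/2 ≤ s) (h₂ : s < 1/2) : f (s, s) = -(s, s) := by
  simp [f, q_eq_zero h₁ h₂]

lemma tendsto_f_diag_nhdsLT_half :
    Tendsto (fun s : ℝ => f (s, s)) (𝓝[<] (1/2)) (𝓝 (-(1/2, 1/2))) := by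
  have hlim : Tendsto (fun s : ℝ => -(s, s)) (𝓝[<] (1/2)) (𝓝 (-(1/2, 1/2))) :=
    ((continuous_id.prodMk continuous_id).neg.tendsto _).mono_left nhdsWithin_le_nhds
  refine hlim.congr' ?_
  filter_upwards [Ioo_mem_nhdsLT (show (-1/2 : ℝ) < 1/2 by norm_num)] with s hs
  exact (f_diag_eq_neg hs.1.le hs.2).symm

lemma neg_half_half_mem_closure_image {δ : ℝ} (hδ : 0 < δ) :
    -((1/2 : ℝ), (1/2 : ℝ)) ∈ closure (f '' {y | ‖y - (1/2, 1/2)‖ < δ}) := by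
  have hball : {y : ℝ × ℝ | ‖y - (1/2, 1/2)‖ < δ} = Metric.ball (1/2, 1/2) δ := by
    ext y; simp [dist_eq_norm]
  have hdiag : Tendsto (fun s : ℝ => (s, s)) (𝓝[<] (1/2)) (𝓝 (1/2, 1/2)) :=
    ((continuous_id.prodMk continuous_id).tendsto _).mono_left nhdsWithin_le_nhds
  refine mem_closure_of_tendsto tendsto_f_diag_nhdsLT_half ?_
  filter_upwards [hdiag (Metric.ball_mem_nhds _ hδ)] with s hs
  exact Set.mem_image_of_mem f (hball ▸ hs)

theorem half_half_Krasowskii_not_Caratheodory :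
    (0 : ℝ × ℝ) ∈ Kras (1/2, 1/2) ∧ f (1/2, 1/2) ≠ 0 := by
  refine ⟨Set.mem_iInter₂.2 fun δ hδ => ?_, by rw [f_half_half]; norm_num [Prod.ext_iff]⟩
  rw [← closedConvexHull_eq_closure_convexHull]
  have hpos : ((1/2 : ℝ), (1/2 : ℝ)) ∈ closedConvexHull ℝ (f '' {y | ‖y - (1/2, 1/2)‖ < δ}) :=
    subset_closedConvexHull ⟨(1/2, 1/2), by simpa using hδ, f_half_half⟩
  have hneg := closure_subset_closedConvexHull (𝕜 := ℝ) (neg_half_half_mem_closure_image hδ)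
  convert convex_closedConvexHull hpos hneg (by norm_num : (0 : ℝ) ≤ 1/2)
    (by norm_num : (0 : ℝ) ≤ 1/2) (add_halves 1) using 1
  rw [smul_neg, add_neg_cancel]
end

section
/- From the point x₀ = (1/2, 1/2) there are exactly two (forward) Carathéodory solutions of the system ẋ₁ = q(x₂) - x₁, ẋ₂ = q(x₁) - x₂: one converging to (0,0) along the diagonal segment, namely x(t) = (e^{-t}/2, e^{-t}/2), and one converging to (1,1), namely x(t) = (1 - e^{-t}/2, 1 - e^{-t}/2). In particular, both functions t ↦ ((1/2)e^{-t}, (1/2)e^{-t}) and t ↦ (1 - (1/2)e^{-t}, 1 - (1/2)e^{-t}) on [0,∞) satisfy the system for almost every t > 0 with initial condition (1/2, 1/2); hence Carathéodory solutions are not unique. -/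
open MeasureTheory

/-- Solution sliding to (0,0). -/
noncomputable def sol₁ (t : ℝ) : ℝ × ℝ :=
  ((1/2) * Real.exp (-t), (1/2) * Real.exp (-t))

/-- Solution sliding to (1,1). -/
noncomputable def sol₂ (t : ℝ) : ℝ × ℝ :=
  (1 - (1/2) * Real.exp (-t), 1 - (1/2) * Real.exp (-t))

/-- `x` is a Carathéodory-type solution of ẋ₁ = q(x₂) - x₁, ẋ₂ = q(x₁) - x₂ on (0,∞)
with initial condition (1/2, 1/2). -/
def IsSol (x : ℝ → ℝ × ℝ) : Prop :=
  x 0 = (1/2, 1/2) ∧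
  (∀ᵐ t ∂(volume : Measure ℝ), 0 < t →
    HasDerivAt (fun s => (x s).1) ((q (x t).2 : ℝ) - (x t).1) t ∧
    HasDerivAt (fun s => (x s).2) ((q (x t).1 : ℝ) - (x t).2) t)

/-! Both solutions stay on the diagonal, where the system reduces to `y' = q y - y`. Away from
`t = 0` each one stays inside a single step of `q`, taking the value `k = 0` resp. `k = 1`, so
it solves the linear equation `y' = k - y`, whose solutions are `k + a e^{-t}`. Only at `t = 0`
does the first one sit on the jump `y = 1/2` of `q`, which the almost-everywhere condition
ignores. -/

open Real Filter Topology Set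

lemma q_eq_of_sub_mem_Ico (k : ℤ) {s : ℝ} (hs : s - k ∈ Ico (-1/2 : ℝ) (1/2)) : q s = k := by
  rw [q, Int.floor_eq_iff]
  constructor <;> linarith [hs.1, hs.2]

lemma hasDerivAt_add_mul_exp_neg (k a t : ℝ) :
    HasDerivAt (fun s => k + a * exp (-s)) (k - (k + a * exp (-t))) t :=
  ((((hasDerivAt_neg t).exp).const_mul a).const_add k).congr_deriv (by ring)

lemma isSol_diag_of_hasDerivAt {y : ℝ → ℝ} (h0 : y 0 = 1/2)
    (hy : ∀ t > 0, HasDerivAt y (q (y t) - y t) t) : IsSol fun t => (y t, y t) :=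
  ⟨by simp [h0], Eventually.of_forall fun t ht => ⟨hy t ht, hy t ht⟩⟩

lemma isSol_diag_add_mul_exp_neg {y : ℝ → ℝ} (k : ℤ) (a : ℝ)
    (hy : y = fun t => k + a * exp (-t)) (h0 : k + a = (1/2 : ℝ))
    (ha : ∀ t > 0, a * exp (-t) ∈ Ico (-1/2 : ℝ) (1/2)) : IsSol fun t => (y t, y t) := by
  subst hy
  refine isSol_diag_of_hasDerivAt (by simpa using h0) fun t ht => ?_
  rw [q_eq_of_sub_mem_Ico k (by simpa using ha t ht)]
  exact hasDerivAt_add_mul_exp_neg k a t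

lemma tendsto_diag_add_mul_exp_neg {y : ℝ → ℝ} (k a : ℝ) (hy : y = fun t => k + a * exp (-t)) :
    Tendsto (fun t => (y t, y t)) atTop (𝓝 (k, k)) := by
  have h : Tendsto y atTop (𝓝 k) := by
    simpa [hy] using (tendsto_exp_neg_atTop_nhds_zero.const_mul a).const_add k
  exact h.prodMk_nhds h

theorem two_Caratheodory_solutions :
    IsSol sol₁ ∧ IsSol sol₂ ∧ sol₁ ≠ sol₂ ∧
    (Filter.Tendsto sol₁ Filter.atTop (nhds (0, 0))) ∧
    (Filter.Tendsto sol₂ Filter.atTop (nhds (1, 1))) := by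
  have hy₁ : (fun t => (1/2) * exp (-t)) = fun t => ((0 : ℤ) : ℝ) + 1/2 * exp (-t) := by
    simp only [Int.cast_zero, zero_add]
  have hy₂ : (fun t => 1 - (1/2) * exp (-t)) = fun t => ((1 : ℤ) : ℝ) + -1/2 * exp (-t) := by
    funext t; push_cast; ring
  have lim₁ : Tendsto sol₁ atTop (𝓝 (0, 0)) :=
    by exact_mod_cast tendsto_diag_add_mul_exp_neg _ _ hy₁
  have lim₂ : Tendsto sol₂ atTop (𝓝 (1, 1)) :=
    by exact_mod_cast tendsto_diag_add_mul_exp_neg _ _ hy₂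
  refine ⟨?_, ?_, fun h => ?_, lim₁, lim₂⟩
  · refine isSol_diag_add_mul_exp_neg 0 (1/2) hy₁ (by norm_num) fun t ht => ⟨?_, ?_⟩
    · linarith [exp_pos (-t)]
    · linarith [exp_lt_one_iff.mpr (neg_lt_zero.mpr ht)]
  · refine isSol_diag_add_mul_exp_neg 1 (-1/2) hy₂ (by norm_num) fun t ht => ⟨?_, ?_⟩
    · linarith [exp_lt_one_iff.mpr (neg_lt_zero.mpr ht)]
    · linarith [exp_pos (-t)]
  · have := tendsto_nhds_unique (h ▸ lim₁) lim₂
    simp at this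
end

section
/- Let N ≥ 2 and let k : {1,…,N} → ℤ satisfy |k_i - k_{i-1}| ≤ min(i - 2, N - i) for all 2 ≤ i ≤ N. Then for all i, j, |k_j - k_i| ≤ (N-2)²/4. -/
/-!
By telescoping, |k_j - k_i| is at most the sum of all admissible step sizes, which is the tent sum
∑_{s=0}^{N-2} min(s, N-2-s) = ⌊(N-2)²/4⌋.
-/

open Finset

lemma four_mul_sum_range_min_le_sq (M : ℕ) :
    4 * ∑ s ∈ range (M + 1), min (s : ℝ) (M - s) ≤ (M : ℝ) ^ 2 := by
  induction M using Nat.twoStepInduction with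
  | zero => simp
  | one => norm_num [sum_range_succ]
  | more M ih _ =>
    -- peeling off both ends of the tent lowers the remaining `M + 1` terms by one each
    have peel : ∑ s ∈ range (M + 3), min (s : ℝ) ((M + 2 : ℕ) - s)
        = ∑ s ∈ range (M + 1), min (s : ℝ) (M - s) + (M + 1) := by
      rw [sum_range_succ, sum_range_succ']
      have inner : ∀ s ∈ range (M + 1),
          min ((s + 1 : ℕ) : ℝ) ((M + 2 : ℕ) - (s + 1 : ℕ)) = min (s : ℝ) (M - s) + 1 := by
        intro s _
        push_cast
        rw [← min_add_add_right]
        congr 1; ring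
      rw [sum_congr rfl inner, sum_add_distrib]
      have hM : (0 : ℝ) ≤ M + 2 := by positivity
      push_cast
      simp [min_eq_left hM, min_eq_right hM]
    rw [peel]
    push_cast
    nlinarith

lemma dist_le_sum_Ico_of_dist_succ_le {α : Type*} [PseudoMetricSpace α] {f : ℕ → α}
    {d : ℕ → ℝ} {a b i j : ℕ} (hai : a ≤ i) (hij : i ≤ j) (hjb : j ≤ b)
    (hd : ∀ t, a ≤ t → t < b → dist (f t) (f (t + 1)) ≤ d t) :
    dist (f i) (f j) ≤ ∑ t ∈ Ico a b, d t := by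
  calc dist (f i) (f j) ≤ ∑ t ∈ Ico i j, d t :=
        dist_le_Ico_sum_of_dist_le hij fun hit htj => hd _ (hai.trans hit) (htj.trans_le hjb)
    _ ≤ ∑ t ∈ Ico a b, d t := by
        refine sum_le_sum_of_subset_of_nonneg (Ico_subset_Ico hai hjb) fun t ht _ => ?_
        rw [mem_Ico] at ht
        exact dist_nonneg.trans (hd t ht.1 ht.2)

theorem total_variation_bound (N : ℕ) (hN : 2 ≤ N) (k : ℕ → ℤ)
    (h : ∀ i : ℕ, 2 ≤ i → i ≤ N →
      |k i - k (i - 1)| ≤ min ((i : ℤ) - 2) ((N : ℤ) - i)) :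
    ∀ i j : ℕ, 1 ≤ i → i ≤ N → 1 ≤ j → j ≤ N →
      (|k j - k i| : ℝ) ≤ ((N : ℝ) - 2) ^ 2 / 4 := by
  intro i j hi hiN hj hjN
  wlog hij : i ≤ j generalizing i j
  · rw [abs_sub_comm]
    exact this j i hj hjN hi hiN (le_of_not_ge hij)
  obtain ⟨M, rfl⟩ := Nat.exists_eq_add_of_le' hN
  have step : ∀ t, 1 ≤ t → t < M + 2 →
      dist (k t : ℝ) (k (t + 1)) ≤ min ((t : ℝ) - 1) (M + 1 - t) := by
    intro t ht1 ht2
    have hZ := h (t + 1) (by omega) (by omega)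
    rw [Nat.add_sub_cancel] at hZ
    have hR := (Int.cast_le (R := ℝ)).2 hZ
    push_cast at hR
    rw [show (t : ℝ) + 1 - 2 = t - 1 by ring,
      show (M : ℝ) + 2 - (t + 1) = M + 1 - t by ring] at hR
    rwa [Real.dist_eq, abs_sub_comm]
  have shift : ∑ t ∈ Ico 1 (M + 2), min ((t : ℝ) - 1) (M + 1 - t)
      = ∑ s ∈ range (M + 1), min (s : ℝ) (M - s) := by
    rw [sum_Ico_eq_sum_range, show M + 2 - 1 = M + 1 by omega]
    refine sum_congr rfl fun s _ => ?_
    push_cast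
    congr 1 <;> ring
  calc (|k j - k i| : ℝ) = dist (k i : ℝ) (k j) := by rw [Real.dist_eq, abs_sub_comm]
    _ ≤ ∑ t ∈ Ico 1 (M + 2), min ((t : ℝ) - 1) (M + 1 - t) :=
        dist_le_sum_Ico_of_dist_succ_le (f := fun t => (k t : ℝ)) hi hij (by omega) step
    _ ≤ ((M + 2 : ℕ) - 2 : ℝ) ^ 2 / 4 := by
        rw [shift]
        push_cast
        linarith [four_mul_sum_range_min_le_sq M]
end

section
/- For the complete-graph dynamics ẋ_i = Σ_{j≠i} (q(x_j) - x_i) on N ≥ 2 agents, the set of extended equilibria equals { h·𝟏 : h ∈ ℤ }, i.e., x* is an extended equilibrium if and only if all components of x* equal a common integer h. -/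
/-! The equilibrium equations say `(N - 1) * x i + k i = ∑ j, k j` for every `i`, so
`(N - 1) * (x i - k i - (x j - k j)) = N * (k j - k i)`. As each `x i` lies within `1/2` of `k i`,
the left side is at most `N - 1` in absolute value, forcing the integers `k i` to agree; the
equations then give `x i = k i`. -/

open Finset

theorem sum_sdiff_singleton_sub {ι R : Type*} [Fintype ι] [DecidableEq ι] [CommRing R]
    (f : ι → R) (c : R) (i : ι) :
    ∑ j ∈ univ \ {i}, (f j - c) = ∑ j, f j - f i - (Fintype.card ι - 1) * c := by
  rw [sum_sub_distrib, sum_sdiff_eq_sub (subset_univ _), sum_const, card_univ_sdiff,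
    card_singleton, nsmul_eq_mul, sum_singleton, Nat.cast_sub (Fintype.card_pos_iff.2 ⟨i⟩),
    Nat.cast_one]

theorem Int.eq_of_mul_add_eq_of_abs_sub_le_half {m x y : ℝ} {a b : ℤ} (hm : 0 ≤ m)
    (hx : |x - a| ≤ 1 / 2) (hy : |y - b| ≤ 1 / 2) (h : m * x + a = m * y + b) : a = b := by
  have hx' := abs_le.1 hx
  have hy' := abs_le.1 hy
  -- `(m + 1) * (a - b) = m * ((y - b) - (x - a))`, so `|a - b| ≤ m / (m + 1) < 1`
  have hlt : |((a - b : ℤ) : ℝ)| < 1 := by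
    rw [abs_lt]
    push_cast
    constructor <;> nlinarith
  rw [← sub_eq_zero, ← Int.abs_lt_one_iff]
  exact_mod_cast hlt

theorem complete_graph_extended_equilibria (N : ℕ) (hN : 2 ≤ N) (x : Fin N → ℝ) :
    (∃ k : Fin N → ℤ,
      (∀ i, ∑ j ∈ univ \ {i}, ((k j : ℝ) - x i) = 0) ∧
      (∀ i, (k i : ℝ) - 1/2 ≤ x i ∧ x i ≤ (k i : ℝ) + 1/2)) ↔
    (∃ h : ℤ, ∀ i, x i = (h : ℝ)) := by
  constructor
  · rintro ⟨k, hfk, hbd⟩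
    have hN1 : (1 : ℝ) ≤ N - 1 := by
      have : (2 : ℝ) ≤ N := by exact_mod_cast hN
      linarith
    have hS : ∀ i, ((N : ℝ) - 1) * x i + k i = ∑ j, (k j : ℝ) := fun i => by
      have := hfk i
      rw [sum_sdiff_singleton_sub, Fintype.card_fin] at this
      linarith
    have hdist : ∀ i, |x i - k i| ≤ 1 / 2 := fun i =>
      abs_sub_le_iff.2 ⟨by linarith [(hbd i).2], by linarith [(hbd i).1]⟩
    obtain ⟨i₀⟩ : Nonempty (Fin N) := ⟨⟨0, by omega⟩⟩
    have hk : ∀ i, k i = k i₀ := fun i =>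
      Int.eq_of_mul_add_eq_of_abs_sub_le_half (by linarith) (hdist i) (hdist i₀)
        ((hS i).trans (hS i₀).symm)
    refine ⟨k i₀, fun i => ?_⟩
    have hSi := hS i
    simp only [hk, sum_const, card_univ, Fintype.card_fin, nsmul_eq_mul] at hSi
    have : ((N : ℝ) - 1) * (x i - k i₀) = 0 := by linarith
    exact sub_eq_zero.1 ((mul_eq_zero.1 this).resolve_left (by linarith))
  · rintro ⟨h, hx⟩
    exact ⟨fun _ => h, fun i => by simp [hx], fun i => by simp [hx]⟩
end

section
/- Let N ≥ 2, k ∈ ℤᴺ, K = Σ_j k_j. If for every i, (N-1)(k_i - 1/2) ≤ K - k_i ≤ (N-1)(k_i + 1/2), then all the k_i are equal. -/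
theorem Int.le_of_mul_le_mul_add_sub_one {n a b : ℤ} (hn : 0 < n)
    (h : n * a ≤ n * b + (n - 1)) : a ≤ b :=
  Int.lt_add_one_iff.mp (lt_of_mul_lt_mul_left (by linarith) hn.le)

theorem complete_graph_integer_lemma_general (N : ℕ) (k : Fin N → ℤ)
    (h : ∀ i, ((N : ℚ) - 1) * ((k i : ℚ) - 1/2) ≤ (∑ j, (k j : ℚ)) - k i ∧
      (∑ j, (k j : ℚ)) - k i ≤ ((N : ℚ) - 1) * ((k i : ℚ) + 1/2)) :
    ∀ i j, k i = k j := by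
  have key : ∀ i j, k i ≤ k j := by
    intro i j
    have hN : (0 : ℤ) < N := by exact_mod_cast i.pos
    -- the lower bound at `i` and the upper bound at `j` both compare `N * k` with
    -- the total sum, up to `(N - 1) / 2`
    have hij : (N : ℚ) * k i ≤ N * k j + (N - 1) := by linarith [(h i).1, (h j).2]
    exact Int.le_of_mul_le_mul_add_sub_one hN (by exact_mod_cast hij)
  exact fun i j => le_antisymm (key i j) (key j i)

theorem complete_graph_integer_lemma (N : ℕ) (hN : 2 ≤ N) (k : Fin N → ℤ)
    (h : ∀ i, ((N : ℚ) - 1) * ((k i : ℚ) - 1/2) ≤ (∑ j, (k j : ℚ)) - k i ∧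
      (∑ j, (k j : ℚ)) - k i ≤ ((N : ℚ) - 1) * ((k i : ℚ) + 1/2)) :
    ∀ i j, k i = k j :=
  complete_graph_integer_lemma_general N k h
end
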